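/- arXiv:1407.2383 — 2 statements merged into one kernel-verified Lean document; each statement's English description precedes it below -/
import Mathlib

section
/- Let $\Lambda$ be a finite dimensional algebra over a field with finite little finitistic dimension. If $\Lambda$ has infinite dominant dimension, i.e., there is a minimal injective resolution $0 \to {}_\Lambda\Lambda \to Q_0 \to Q_1 \to \cdots$ of the left regular module in which every term $Q_i$ is projective, then $\Lambda$ is self-injective (quasi-Frobenius): the left regular module ${}_\Lambda\Lambda$ is injective. -/
/-!
Every `Q i` is finitely generated: if `N` is a finitely generated essential submodule of a module
`E` over the finite dimensional algebra `Λ`, a `k`-linear retraction `π : E → N` makes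
`x ↦ (a ↦ π (a • x))` injective, so `E` embeds in `Hom_k(Λ, N)`. Hence `ker f_(d+1) = im f_d` is
finitely generated, and it has finite projective dimension because it is resolved by
`Λ, Q 0, …, Q d`; so its projective dimension is at most `d`. Shifting dimension back along the
projectives `Q d, …, Q 1` shows that `ker f_1` is projective. Then `0 → Λ → Q 0 → ker f_1 → 0`
splits and `Λ` is a direct summand of the injective module `Q 0`.
-/

set_option synthInstance.maxHeartbeats 1000000
set_option maxHeartbeats 1000000

universe u v

/-- `pdLE R n M` means the left `R`-module `M` has projective dimension at most `n`,
i.e. it admits a projective resolution of length `n`. -/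
def pdLE (R : Type u) [Ring R] : ℕ → (M : Type v) → [AddCommGroup M] → [Module R M] → Prop
  | 0, M, _, _ => Module.Projective R M
  | n + 1, M, _, _ =>
      ∃ (P : Type v) (_ : AddCommGroup P) (_ : Module R P) (f : P →ₗ[R] M),
        Module.Projective R P ∧ Function.Surjective f ∧ pdLE R n (LinearMap.ker f)

/-- `M` has finite projective dimension over `R`. -/
def HasFinitePd (R : Type u) [Ring R] (M : Type v) [AddCommGroup M] [Module R M] : Prop :=
  ∃ n, pdLE R n M

theorem Module.Finite.of_essential (k : Type*) {Λ E : Type*} [Field k] [Ring Λ] [Algebra k Λ]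
    [FiniteDimensional k Λ] [AddCommGroup E] [Module Λ E] (N : Submodule Λ E)
    [Module.Finite Λ N] (hN : ∀ C : Submodule Λ E, C ⊓ N = ⊥ → C = ⊥) :
    Module.Finite Λ E := by
  let _ : Module k E := Module.compHom E (algebraMap k Λ)
  have : IsScalarTower k Λ E := ⟨fun c a x => by
    show (c • a) • x = algebraMap k Λ c • a • x
    rw [Algebra.smul_def, mul_smul]⟩
  have : FiniteDimensional k N := Module.Finite.trans Λ N
  have : FiniteDimensional k (N.restrictScalars k) := this
  obtain ⟨π, hπ⟩ := (N.restrictScalars k).subtype.exists_leftInverse_of_injective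
    (N.restrictScalars k).ker_subtype
  let Ψ : E →ₗ[k] Λ →ₗ[k] N.restrictScalars k :=
    (Algebra.lsmul k k E).toLinearMap.flip.compr₂ π
  -- `ker Ψ` is a `Λ`-submodule on which `π` vanishes, while `π` is the identity on `N`.
  let K : Submodule Λ E :=
    { carrier := {x | ∀ a : Λ, π (a • x) = 0}
      add_mem' := fun hx hy a => by simp [smul_add, hx a, hy a]
      zero_mem' := fun a => by simp
      smul_mem' := fun b x hx a => by simpa [smul_smul] using hx (a * b) }
  have hK : K ⊓ N = ⊥ := eq_bot_iff.2 fun x ⟨hxK, hxN⟩ => by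
    have hπx : π x = ⟨x, hxN⟩ := LinearMap.congr_fun hπ ⟨x, hxN⟩
    have := hxK 1
    rw [one_smul, hπx] at this
    exact (Submodule.mem_bot Λ).2 (congrArg Subtype.val this)
  have hΨ : Function.Injective Ψ := by
    rw [← LinearMap.ker_eq_bot, eq_bot_iff]
    intro x hx
    have : x ∈ K := fun a => LinearMap.congr_fun hx a
    rwa [hN K hK] at this
  have : FiniteDimensional k E := Module.Finite.of_injective Ψ hΨ
  exact Module.Finite.of_restrictScalars_finite k Λ E

def Submodule.prodEquiv {R M N : Type*} [Ring R] [AddCommGroup M] [Module R M] [AddCommGroup N]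
    [Module R N] (p : Submodule R M) (q : Submodule R N) : p.prod q ≃ₗ[R] p × q where
  toFun x := (⟨x.1.1, x.2.1⟩, ⟨x.1.2, x.2.2⟩)
  invFun y := ⟨(y.1, y.2), y.1.2, y.2.2⟩
  map_add' _ _ := rfl
  map_smul' _ _ := rfl

theorem LinearMap.exists_surjective_ker_eq_of_ker_eq_range {R P M N : Type*} [Ring R]
    [AddCommGroup P] [Module R P] [AddCommGroup M] [Module R M] [AddCommGroup N] [Module R N]
    {u : P →ₗ[R] M} {v : M →ₗ[R] N} (h : ker v = range u) :
    ∃ g : P →ₗ[R] ker v, Function.Surjective g ∧ ker g = ker u :=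
  ⟨u.codRestrict (ker v) fun x => h ▸ mem_range_self u x,
    fun ⟨_, hy⟩ => have ⟨x, hx⟩ := h ▸ hy; ⟨x, Subtype.ext hx⟩, ker_codRestrict _ _ _⟩

section Splitting

variable {R M N P : Type*} [Ring R] [AddCommGroup M] [Module R M] [AddCommGroup N] [Module R N]
  [AddCommGroup P] [Module R P] [Module.Projective R P]

theorem Function.Exact.nonempty_linearEquiv_prod {f : M →ₗ[R] N} {g : N →ₗ[R] P}
    (h : Function.Exact f g) (hf : Function.Injective f) (hg : Function.Surjective g) :
    Nonempty (N ≃ₗ[R] M × P) :=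
  have ⟨l, hl⟩ := g.exists_rightInverse_of_surjective (LinearMap.range_eq_top.2 hg)
  ⟨(h.splitSurjectiveEquiv hf ⟨l, hl⟩).1⟩

theorem LinearMap.nonempty_ker_fst_comp_equiv (g : N →ₗ[R] M × P) (hg : Function.Surjective g) :
    Nonempty (ker (fst R M P ∘ₗ g) ≃ₗ[R] ker g × P) := by
  refine Function.Exact.nonempty_linearEquiv_prod (f := Submodule.inclusion (ker_le_ker_comp g _))
    (g := snd R M P ∘ₗ g ∘ₗ (ker (fst R M P ∘ₗ g)).subtype) ?_ (Submodule.inclusion_injective _)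
    fun p => ?_
  · exact fun ⟨x, hx⟩ => ⟨fun h => ⟨⟨x, Prod.ext hx h⟩, rfl⟩,
      fun ⟨y, hy⟩ => hy ▸ congrArg Prod.snd y.2⟩
  · obtain ⟨x, hx⟩ := hg (0, p)
    exact ⟨⟨x, by simp [hx]⟩, by simp [hx]⟩

theorem LinearMap.nonempty_ker_coprod_equiv (g : M →ₗ[R] N) (hg : Function.Surjective g)
    (f : P →ₗ[R] N) : Nonempty (ker (g.coprod f) ≃ₗ[R] ker g × P) := by
  refine Function.Exact.nonempty_linearEquiv_prod
    (f := (inl R M P).restrict (p := ker g) (q := ker (g.coprod f)) fun x hx => by simpa using hx)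
    (g := snd R M P ∘ₗ (ker (g.coprod f)).subtype) ?_ ?_ fun p => ?_
  · exact fun ⟨⟨a, b⟩, hab⟩ => ⟨fun (hb : b = 0) =>
      ⟨⟨a, by simpa [hb] using hab⟩, Subtype.ext (Prod.ext rfl hb.symm)⟩,
      fun ⟨y, hy⟩ => (congrArg (fun z => z.1.2) hy).symm⟩
  · exact fun x y h => Subtype.ext (congrArg (fun z => z.1.1) h)
  · obtain ⟨a, ha⟩ := hg (-f p)
    exact ⟨⟨(a, p), by simp [ha]⟩, rfl⟩

theorem LinearMap.nonempty_ker_prod_equiv_ker_prod {P' : Type*} [AddCommGroup P'] [Module R P']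
    [Module.Projective R P'] (g : P →ₗ[R] M) (hg : Function.Surjective g) (f : P' →ₗ[R] M)
    (hf : Function.Surjective f) : Nonempty ((ker g × P') ≃ₗ[R] (ker f × P)) := by
  obtain ⟨e₁⟩ := g.nonempty_ker_coprod_equiv hg f
  obtain ⟨e₂⟩ := f.nonempty_ker_coprod_equiv hf g
  have e₃ : ker (g.coprod f) ≃ₗ[R] ker (f.coprod g) :=
    (LinearEquiv.prodComm R P P').ofSubmodules _ _ (by ext ⟨a, b⟩; simp [add_comm])
  exact ⟨e₁.symm ≪≫ₗ e₃ ≪≫ₗ e₂⟩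

end Splitting

theorem Module.Injective.of_retract {R : Type*} {M N : Type v} [Ring R] [AddCommGroup M]
    [Module R M] [AddCommGroup N] [Module R N] (hN : Module.Injective R N) (i : M →ₗ[R] N)
    (r : N →ₗ[R] M) (hr : r ∘ₗ i = LinearMap.id) : Module.Injective R M where
  out X Y _ _ _ _ φ hφ g := by
    obtain ⟨h, hh⟩ := hN.out φ hφ (i ∘ₗ g)
    exact ⟨r ∘ₗ h, fun x => by simp [hh, ← LinearMap.comp_apply r i, hr]⟩

theorem Module.Injective.of_exact_of_projective {R : Type*} {M N P : Type v} [Ring R]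
    [AddCommGroup M] [Module R M] [AddCommGroup N] [Module R N] [AddCommGroup P] [Module R P]
    [Module.Projective R P] (hN : Module.Injective R N) {f : M →ₗ[R] N}
    {g : N →ₗ[R] P} (h : Function.Exact f g) (hf : Function.Injective f)
    (hg : Function.Surjective g) : Module.Injective R M := by
  obtain ⟨r, hr⟩ := ((h.split_tfae hf hg).out 0 1).1
    (g.exists_rightInverse_of_surjective (LinearMap.range_eq_top.2 hg))
  exact hN.of_retract f r hr

section ProjectiveDimension

variable {R : Type u} [Ring R]

theorem pdLE_of_equiv : ∀ {n : ℕ} {M N : Type v} [AddCommGroup M] [Module R M] [AddCommGroup N]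
    [Module R N], (M ≃ₗ[R] N) → pdLE R n M → pdLE R n N
  | 0, M, _, _, _, _, _, e, h => have : Module.Projective R M := h; .of_equiv e
  | _ + 1, _, _, _, _, _, _, e, ⟨P, _, _, g, hP, hg, hK⟩ =>
    ⟨P, _, _, e.toLinearMap ∘ₗ g, hP, e.surjective.comp hg, by rwa [LinearEquiv.ker_comp]⟩

theorem pdLE_of_projective : ∀ (n : ℕ) {P : Type v} [AddCommGroup P] [Module R P]
    [Module.Projective R P], pdLE R n P
  | 0, _, _, _, h => h
  | n + 1, P, _, _, h => ⟨P, _, _, LinearMap.id, h, Function.surjective_id, by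
      have : Module.Projective R (LinearMap.ker (LinearMap.id : P →ₗ[R] P)) := by
        rw [LinearMap.ker_id]; infer_instance
      exact pdLE_of_projective n⟩

theorem pdLE_prod : ∀ {n : ℕ} {M N : Type v} [AddCommGroup M] [Module R M] [AddCommGroup N]
    [Module R N], pdLE R n M → pdLE R n N → pdLE R n (M × N)
  | 0, M, N, _, _, _, _, hM, hN =>
    have : Module.Projective R M := hM
    have : Module.Projective R N := hN
    inferInstanceAs (Module.Projective R (M × N))
  | _ + 1, _, _, _, _, _, _, ⟨P, _, _, f, hP, hf, hK⟩, ⟨P', _, _, f', hP', hf', hK'⟩ =>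
    ⟨P × P', _, _, f.prodMap f', inferInstance, hf.prodMap hf', by
      rw [LinearMap.ker_prodMap]
      exact pdLE_of_equiv (Submodule.prodEquiv _ _).symm (pdLE_prod hK hK')⟩

theorem pdLE_of_prod_projective : ∀ {n : ℕ} {M P : Type v} [AddCommGroup M] [Module R M]
    [AddCommGroup P] [Module R P] [Module.Projective R P], pdLE R n (M × P) → pdLE R n M
  | 0, M, P, _, _, _, _, _, h =>
    have : Module.Projective R (M × P) := h
    .of_split (LinearMap.inl R M P) (LinearMap.fst R M P) (by ext; simp)
  | n + 1, M, P, _, _, _, _, _, ⟨P', _, _, g, hP', hg, hK⟩ =>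
    ⟨P', _, _, LinearMap.fst R M P ∘ₗ g, hP', Prod.fst_surjective.comp hg,
      have ⟨e⟩ := g.nonempty_ker_fst_comp_equiv hg
      pdLE_of_equiv e.symm (pdLE_prod hK (pdLE_of_projective n))⟩

theorem pdLE_ker_of_surjective {n : ℕ} {M P : Type v} [AddCommGroup M] [Module R M]
    [AddCommGroup P] [Module R P] [Module.Projective R P] (hM : pdLE R (n + 1) M)
    (g : P →ₗ[R] M) (hg : Function.Surjective g) : pdLE R n (LinearMap.ker g) := by
  obtain ⟨P', _, _, f, hP', hf, hK⟩ := hM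
  obtain ⟨e⟩ := g.nonempty_ker_prod_equiv_ker_prod hg f hf
  exact pdLE_of_prod_projective (pdLE_of_equiv e.symm (pdLE_prod hK (pdLE_of_projective n)))

theorem pdLE_succ_ker_iff {n : ℕ} {P M N : Type v} [AddCommGroup P] [Module R P]
    [Module.Projective R P] [AddCommGroup M] [Module R M] [AddCommGroup N] [Module R N]
    {u : P →ₗ[R] M} {v : M →ₗ[R] N} (h : LinearMap.ker v = LinearMap.range u) :
    pdLE R (n + 1) (LinearMap.ker v) ↔ pdLE R n (LinearMap.ker u) := by
  obtain ⟨g, hg, hker⟩ := LinearMap.exists_surjective_ker_eq_of_ker_eq_range h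
  rw [← hker]
  exact ⟨fun hv => pdLE_ker_of_surjective hv g hg, fun hu => ⟨P, _, _, g, ‹_›, hg, hu⟩⟩

theorem projective_ker_of_pdLE_ker {Q : ℕ → Type v} [∀ i, AddCommGroup (Q i)]
    [∀ i, Module R (Q i)] [∀ i, Module.Projective R (Q i)] {f : ∀ i, Q i →ₗ[R] Q (i + 1)}
    (hex : ∀ i, LinearMap.ker (f (i + 1)) = LinearMap.range (f i)) :
    ∀ n, pdLE R n (LinearMap.ker (f (n + 1))) → Module.Projective R (LinearMap.ker (f 1))
  | 0, h => h
  | n + 1, h => projective_ker_of_pdLE_ker hex n ((pdLE_succ_ker_iff (hex (n + 1))).1 h)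

end ProjectiveDimension

/-- Tachikawa: a finite dimensional algebra with finite little finitistic dimension and
infinite dominant dimension (a minimal injective resolution of `Λ` all of whose terms are
projective) is self-injective. -/
theorem stmt8 (k : Type u) (Λ : Type u) [Field k] [Ring Λ] [Algebra k Λ]
    [FiniteDimensional k Λ]
    (hfd : ∃ d : ℕ, ∀ (M : Type u) [AddCommGroup M] [Module Λ M],
      Module.Finite Λ M → HasFinitePd Λ M → pdLE Λ d M)
    (Q : ℕ → Type u) [∀ i, AddCommGroup (Q i)] [∀ i, Module Λ (Q i)]
    (hQinj : ∀ i, Module.Injective Λ (Q i)) (hQproj : ∀ i, Module.Projective Λ (Q i))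
    (ι : Λ →ₗ[Λ] Q 0) (f : ∀ i, Q i →ₗ[Λ] Q (i + 1))
    (hι : Function.Injective ι)
    (hex0 : LinearMap.ker (f 0) = LinearMap.range ι)
    (hex : ∀ i, LinearMap.ker (f (i + 1)) = LinearMap.range (f i))
    -- minimality: each image is an essential submodule of the next term
    (hmin0 : ∀ N : Submodule Λ (Q 0), N ⊓ LinearMap.range ι = ⊥ → N = ⊥)
    (hmin : ∀ i, ∀ N : Submodule Λ (Q (i + 1)), N ⊓ LinearMap.range (f i) = ⊥ → N = ⊥) :
    Module.Injective Λ Λ := by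
  obtain ⟨d, hd⟩ := hfd
  have := hQproj
  have hfin : ∀ i, Module.Finite Λ (Q i) := by
    intro i
    induction i with
    | zero => exact .of_essential k _ hmin0
    | succ i ih => exact .of_essential k _ (hmin i)
  have hpd : ∀ i, pdLE Λ i (LinearMap.ker (f i)) := by
    intro i
    induction i with
    | zero => rw [hex0]; exact Module.Projective.of_equiv (LinearEquiv.ofInjective ι hι)
    | succ i ih => exact (pdLE_succ_ker_iff (hex i)).2 ih
  have hpd_d : pdLE Λ d (LinearMap.ker (f (d + 1))) := by
    have : Module.Finite Λ (LinearMap.ker (f (d + 1))) := by rw [hex d]; infer_instance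
    exact hd _ this ⟨_, hpd (d + 1)⟩
  have : Module.Projective Λ (LinearMap.ker (f 1)) := projective_ker_of_pdLE_ker hex d hpd_d
  obtain ⟨g, hg, hker⟩ := LinearMap.exists_surjective_ker_eq_of_ker_eq_range (hex 0)
  exact (hQinj 0).of_exact_of_projective (LinearMap.exact_iff.2 (hker.trans hex0)) hι hg
end

section
/- Let $\Lambda$ be a finite dimensional algebra over a field, with infinite dominant dimension witnessed by a minimal injective resolution $0 \to {}_\Lambda\Lambda \to Q_0 \to Q_1 \to \cdots$ with maps $f_i: Q_i \to Q_{i+1}$ and all $Q_i$ projective. If for some $d \ge 0$ the kernel of $f_{d+1}$ has projective dimension at most $d$, then $\Lambda$ is a direct summand of $Q_0$, hence ${}_\Lambda\Lambda$ is injective. -/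
/-!
Splitting the resolution into short exact sequences `0 → ker fᵢ → Qᵢ → ker fᵢ₊₁ → 0` with
projective middle terms, each step lowers the projective dimension of the kernel by one, so
`pd (ker f_{d+1}) ≤ d` forces `ker f₁` to be projective. Then `0 → Λ → Q₀ → ker f₁ → 0` splits,
exhibiting `Λ` as a retract of the injective module `Q₀`.
-/

set_option synthInstance.maxHeartbeats 1000000
set_option maxHeartbeats 1000000

universe u v

open CategoryTheory LinearMap

section Exact

variable {R : Type u} [Ring R] {L M N P : Type v} [AddCommGroup L] [Module R L]
  [AddCommGroup M] [Module R M] [AddCommGroup N] [Module R N] [AddCommGroup P] [Module R P]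

theorem Function.Exact.codRestrict {k : L →ₗ[R] M} {f : M →ₗ[R] N} (h : Function.Exact k f)
    (p : Submodule R N) (hp : ∀ x, f x ∈ p) : Function.Exact k (f.codRestrict p hp) := by
  intro x
  rw [← h x]
  simp [Subtype.ext_iff]

theorem Function.Exact.surjective_codRestrict_ker {f : M →ₗ[R] N} {g : N →ₗ[R] P}
    (h : Function.Exact f g) :
    Function.Surjective (f.codRestrict (ker g) h.apply_apply_eq_zero) := by
  rintro ⟨y, hy⟩
  obtain ⟨x, rfl⟩ := (h y).1 hy
  exact ⟨x, rfl⟩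

theorem Function.Exact.exists_retraction_of_projective [Module.Projective R P]
    {f : M →ₗ[R] N} {g : N →ₗ[R] P} (h : Function.Exact f g) (hf : Function.Injective f)
    (hg : Function.Surjective g) : ∃ r : N →ₗ[R] M, r ∘ₗ f = LinearMap.id := by
  obtain ⟨s, hs⟩ := Module.projective_lifting_property g LinearMap.id hg
  have hsection : ∃ s, g ∘ₗ s = LinearMap.id := ⟨s, hs⟩
  exact ((h.split_tfae hf hg).out 0 1).1 hsection

theorem Module.Injective.of_retraction [Module.Injective R N] (i : M →ₗ[R] N) (r : N →ₗ[R] M)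
    (hri : r ∘ₗ i = LinearMap.id) : Module.Injective R M where
  out X Y _ _ _ _ e he φ := by
    obtain ⟨ψ, hψ⟩ := Module.Injective.out (Q := N) e he (i ∘ₗ φ)
    refine ⟨r ∘ₗ ψ, fun x => ?_⟩
    rw [LinearMap.comp_apply, hψ]
    exact LinearMap.congr_fun hri (φ x)

end Exact

section ProjectiveDimension

variable {R : Type u} [Ring R]

theorem hasProjectiveDimensionLE_of_pdLE {n : ℕ} {M : Type v} [AddCommGroup M] [Module R M]
    (h : pdLE R n M) : HasProjectiveDimensionLE (ModuleCat.of R M) n := by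
  induction n generalizing M with
  | zero =>
    have : Module.Projective R M := h
    exact (projective_iff_hasProjectiveDimensionLE_zero _).1 inferInstance
  | succ n ih =>
    obtain ⟨P, _, _, g, hP, hg, hker⟩ := h
    exact (g.shortExact_shortComplexKer hg).hasProjectiveDimensionLT_X₃ (n + 1) (ih hker)
      inferInstance

theorem hasProjectiveDimensionLE_ker_of_exact {n : ℕ} {M N P : Type v}
    [AddCommGroup M] [Module R M] [AddCommGroup N] [Module R N] [AddCommGroup P] [Module R P]
    [Module.Projective R M] {f : M →ₗ[R] N} {g : N →ₗ[R] P} (hfg : Function.Exact f g)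
    (h : HasProjectiveDimensionLE (ModuleCat.of R (ker g)) (n + 1)) :
    HasProjectiveDimensionLE (ModuleCat.of R (ker f)) n := by
  have hexact := (exact_subtype_ker_map f).codRestrict (ker g) hfg.apply_apply_eq_zero
  have hS := ModuleCat.shortComplex_shortExact
    (ModuleCat.shortComplexOfCompEqZero _ _ hexact.linearMap_comp_eq_zero)
    hexact (ker f).injective_subtype hfg.surjective_codRestrict_ker
  exact hS.hasProjectiveDimensionLT_X₁ (n + 1) inferInstance h

theorem hasProjectiveDimensionLE_ker_of_add {Q : ℕ → Type v} [∀ i, AddCommGroup (Q i)]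
    [∀ i, Module R (Q i)] [∀ i, Module.Projective R (Q i)] {f : ∀ i, Q i →ₗ[R] Q (i + 1)}
    (hex : ∀ i, ker (f (i + 1)) = range (f i)) (i n m : ℕ)
    (h : HasProjectiveDimensionLE (ModuleCat.of R (ker (f (i + m)))) (n + m)) :
    HasProjectiveDimensionLE (ModuleCat.of R (ker (f i))) n := by
  induction m with
  | zero => exact h
  | succ m ih => exact ih (hasProjectiveDimensionLE_ker_of_exact (exact_iff.2 (hex (i + m))) h)

end ProjectiveDimension

theorem stmt9_general (Λ : Type u) [Ring Λ]
    (Q : ℕ → Type u) [∀ i, AddCommGroup (Q i)] [∀ i, Module Λ (Q i)]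
    (hQinj : ∀ i, Module.Injective Λ (Q i)) (hQproj : ∀ i, Module.Projective Λ (Q i))
    (ι : Λ →ₗ[Λ] Q 0) (f : ∀ i, Q i →ₗ[Λ] Q (i + 1))
    (hι : Function.Injective ι)
    (hex0 : LinearMap.ker (f 0) = LinearMap.range ι)
    (hex : ∀ i, LinearMap.ker (f (i + 1)) = LinearMap.range (f i))
    (d : ℕ) (hker : pdLE Λ d (LinearMap.ker (f (d + 1)))) :
    (∃ g : Q 0 →ₗ[Λ] Λ, g.comp ι = LinearMap.id) ∧ Module.Injective Λ Λ := by
  have hK : HasProjectiveDimensionLE (ModuleCat.of Λ (ker (f 1))) 0 :=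
    hasProjectiveDimensionLE_ker_of_add hex 1 0 d <| by
      rw [zero_add, add_comm]
      exact hasProjectiveDimensionLE_of_pdLE hker
  have : Module.Projective Λ (ker (f 1)) :=
    (IsProjective.iff_projective _).2 ((projective_iff_hasProjectiveDimensionLE_zero _).2 hK)
  have hf₀ : Function.Exact (f 0) (f 1) := exact_iff.2 (hex 0)
  have hexact := (exact_iff.2 hex0).codRestrict (ker (f 1)) hf₀.apply_apply_eq_zero
  obtain ⟨g, hg⟩ := hexact.exists_retraction_of_projective hι hf₀.surjective_codRestrict_ker
  exact ⟨⟨g, hg⟩, Module.Injective.of_retraction ι g hg⟩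

/-- If `0 → Λ → Q 0 → Q 1 → ⋯` is a minimal injective resolution of a finite dimensional
algebra `Λ` with all terms `Q i` projective, and for some `d` the kernel of `f (d+1)` has
projective dimension at most `d`, then `Λ` is a direct summand of `Q 0`; hence `Λ` is
self-injective. -/
theorem stmt9 (k : Type u) (Λ : Type u) [Field k] [Ring Λ] [Algebra k Λ]
    [FiniteDimensional k Λ]
    (Q : ℕ → Type u) [∀ i, AddCommGroup (Q i)] [∀ i, Module Λ (Q i)]
    (hQinj : ∀ i, Module.Injective Λ (Q i)) (hQproj : ∀ i, Module.Projective Λ (Q i))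
    (ι : Λ →ₗ[Λ] Q 0) (f : ∀ i, Q i →ₗ[Λ] Q (i + 1))
    (hι : Function.Injective ι)
    (hex0 : LinearMap.ker (f 0) = LinearMap.range ι)
    (hex : ∀ i, LinearMap.ker (f (i + 1)) = LinearMap.range (f i))
    -- minimality: each image is an essential submodule of the next term
    (hmin0 : ∀ N : Submodule Λ (Q 0), N ⊓ LinearMap.range ι = ⊥ → N = ⊥)
    (hmin : ∀ i, ∀ N : Submodule Λ (Q (i + 1)), N ⊓ LinearMap.range (f i) = ⊥ → N = ⊥)
    (d : ℕ) (hker : pdLE Λ d (LinearMap.ker (f (d + 1)))) :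
    (∃ g : Q 0 →ₗ[Λ] Λ, g.comp ι = LinearMap.id) ∧ Module.Injective Λ Λ :=
  stmt9_general Λ Q hQinj hQproj ι f hι hex0 hex d hker
end
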